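/- With A_1,...,A_n the anticommuting self-adjoint matrices from Pauli constructions, the operator norm of Σ_{i=1}^n A_i ⊗ A_i in M_{2^n}(ℂ) ⊗ M_{2^n}(ℂ) ≅ M_{4^n}(ℂ) is at least n. Consequently the completely bounded norm of the map φ(e_i) = (1/√n) A_i from ℓ_∞^n to M_{2^n}(ℂ) is at least √n. -/

import Mathlib

open scoped Matrix Kronecker BigOperators

noncomputable def opNorm {ι : Type*} [Fintype ι] [DecidableEq ι] (A : Matrix ι ι ℂ) : ℝ :=
  ‖Matrix.toEuclideanCLM (𝕜 := ℂ) A‖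

def pauliX : Matrix (Fin 2) (Fin 2) ℂ := !![0, 1; 1, 0]

def pauliZ : Matrix (Fin 2) (Fin 2) ℂ := !![1, 0; 0, -1]

noncomputable def pauliOp (n : ℕ) (k : Fin n) :
    Matrix (Fin n → Fin 2) (Fin n → Fin 2) ℂ :=
  Matrix.of fun f g => ∏ j : Fin n,
    (if j < k then pauliZ else if j = k then pauliX else 1) (f j) (g j)

/-- The completely bounded norm of a linear map `φ : ℓ_∞^n → M_d(ℂ)` (here `d` is replaced by
an arbitrary finite index type `ι`): the supremum over `k` of the norms of the amplifications
`id_{M_k} ⊗ φ : M_k(ℓ_∞^n) → M_k(M_d)`, where a matrix `B ∈ M_k(ℓ_∞^n)` has norm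
`sup_i ‖(B_{rs}(i))_{rs}‖`. -/
noncomputable def cbNorm {n : ℕ} {ι : Type*} [Fintype ι] [DecidableEq ι]
    (φ : (Fin n → ℂ) →ₗ[ℂ] Matrix ι ι ℂ) : ℝ :=
  ⨆ k : ℕ, sSup {r : ℝ | ∃ B : Matrix (Fin k) (Fin k) (Fin n → ℂ),
    (∀ i : Fin n, opNorm (Matrix.of fun p q => B p q i) ≤ 1) ∧
    r = opNorm (Matrix.of fun p q : Fin k × ι => φ (B p.1 q.1) p.2 q.2)}

/-!
Each `A_i = pauliOp n i` is a Kronecker product of the real symmetric involutions `X`, `Z`, `1`,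
hence a real symmetric involution itself. For the vectorised identity `z = vec 1` one has
`(A ⊗ A) z = vec (A Aᵀ) = z`, so `z` is an eigenvector of `∑ A_i ⊗ A_i` with eigenvalue `n`.
The amplification of `φ` at the contraction `B ∈ M_{2^n}(ℓ_∞^n)` with `B(i) = A_i` is
`(1/√n) ∑ A_i ⊗ A_i`, of norm at least `n / √n = √n`.
Since `X ↦ X ⊗ 1` and `Y ↦ 1 ⊗ Y` are *-homomorphisms of C⋆-algebras, hence contractive, every
amplification of `φ` has norm at most `∑ ‖φ(e_i)‖`; this keeps the suprema in `cbNorm` finite.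
-/

open Matrix
open scoped Matrix.Norms.L2Operator

theorem opNorm_eq_l2_opNorm {ι : Type*} [Fintype ι] [DecidableEq ι] (A : Matrix ι ι ℂ) :
    opNorm A = ‖A‖ :=
  rfl

namespace Matrix

section PiKronecker

variable {ι α : Type*} [Fintype ι]

def piKronecker (M : ι → Matrix α α ℂ) : Matrix (ι → α) (ι → α) ℂ :=
  of fun f g => ∏ j, M j (f j) (g j)

theorem piKronecker_mul [Fintype α] [DecidableEq ι] (M N : ι → Matrix α α ℂ) :
    piKronecker M * piKronecker N = piKronecker (M * N) := by
  ext f g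
  simp only [piKronecker, mul_apply, of_apply, Pi.mul_apply, ← Finset.prod_mul_distrib,
    Fintype.prod_sum]

theorem piKronecker_one [DecidableEq α] [DecidableEq ι] :
    piKronecker (1 : ι → Matrix α α ℂ) = 1 := by
  ext f g
  by_cases hfg : f = g
  · subst hfg
    simp [piKronecker]
  · obtain ⟨j, hj⟩ := Function.ne_iff.mp hfg
    simp only [piKronecker, of_apply, Pi.one_apply, one_apply_ne hfg]
    exact Finset.prod_eq_zero (Finset.mem_univ j) (one_apply_ne hj)

theorem piKronecker_transpose (M : ι → Matrix α α ℂ) :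
    (piKronecker M)ᵀ = piKronecker fun j => (M j)ᵀ :=
  rfl

theorem piKronecker_conjTranspose (M : ι → Matrix α α ℂ) :
    (piKronecker M)ᴴ = piKronecker fun j => (M j)ᴴ := by
  ext f g
  simp [piKronecker, star_prod]

end PiKronecker

section L2OpNorm

variable {σ τ : Type*} [Fintype σ] [Fintype τ] [DecidableEq σ] [DecidableEq τ]

theorem norm_le_l2_opNorm_of_mulVec_eq_smul {A : Matrix τ τ ℂ} {v : τ → ℂ} (hv : v ≠ 0) {c : ℂ}
    (h : A *ᵥ v = c • v) : ‖c‖ ≤ ‖A‖ := by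
  have hAv := l2_opNorm_mulVec A (WithLp.toLp 2 v)
  have hv' : 0 < ‖WithLp.toLp 2 v‖ := by simpa using hv
  rw [WithLp.ofLp_toLp, h, map_smul, norm_smul] at hAv
  exact le_of_mul_le_mul_right hAv hv'

theorem l2_opNorm_le_one_of_conjTranspose_mul_self {A : Matrix τ τ ℂ} (hA : Aᴴ * A = 1) :
    ‖A‖ ≤ 1 := by
  have h1 : ‖(1 : Matrix τ τ ℂ)‖ ≤ 1 := by
    rw [cstar_norm_def, map_one]
    exact ContinuousLinearMap.norm_id_le
  have hAA := l2_opNorm_conjTranspose_mul_self A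
  rw [hA] at hAA
  nlinarith [norm_nonneg A]

variable (σ τ) in
def kroneckerOneStarAlgHom : Matrix σ σ ℂ →⋆ₐ[ℂ] Matrix (σ × τ) (σ × τ) ℂ where
  toFun A := A ⊗ₖ 1
  map_one' := one_kronecker_one
  map_mul' A B := by rw [← mul_kronecker_mul, mul_one]
  map_zero' := zero_kronecker _
  map_add' A B := add_kronecker A B 1
  commutes' r := by simp only [Algebra.algebraMap_eq_smul_one, smul_kronecker, one_kronecker_one]
  map_star' A := by simp only [star_eq_conjTranspose, conjTranspose_kronecker, conjTranspose_one]

variable (σ τ) in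
def oneKroneckerStarAlgHom : Matrix τ τ ℂ →⋆ₐ[ℂ] Matrix (σ × τ) (σ × τ) ℂ where
  toFun A := 1 ⊗ₖ A
  map_one' := one_kronecker_one
  map_mul' A B := by rw [← mul_kronecker_mul, mul_one]
  map_zero' := kronecker_zero _
  map_add' A B := kronecker_add 1 A B
  commutes' r := by simp only [Algebra.algebraMap_eq_smul_one, kronecker_smul, one_kronecker_one]
  map_star' A := by simp only [star_eq_conjTranspose, conjTranspose_kronecker, conjTranspose_one]

theorem l2_opNorm_kronecker_le (A : Matrix σ σ ℂ) (B : Matrix τ τ ℂ) : ‖A ⊗ₖ B‖ ≤ ‖A‖ * ‖B‖ :=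
  calc ‖A ⊗ₖ B‖ = ‖kroneckerOneStarAlgHom σ τ A * oneKroneckerStarAlgHom σ τ B‖ := by
        simp [kroneckerOneStarAlgHom, oneKroneckerStarAlgHom, ← mul_kronecker_mul]
    _ ≤ ‖A‖ * ‖B‖ := (norm_mul_le _ _).trans <| mul_le_mul
        (NonUnitalStarAlgHom.norm_apply_le _ _) (NonUnitalStarAlgHom.norm_apply_le _ _)
        (norm_nonneg _) (norm_nonneg _)

end L2OpNorm

section VecOne

variable {σ τ κ : Type*} [Fintype σ] [Fintype τ] [DecidableEq τ] [Fintype κ]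

theorem kronecker_submatrix_mulVec_vec_one_submatrix {R : Type*} [CommRing R]
    (A : Matrix τ τ R) (hA : A * Aᵀ = 1) (e : σ ≃ τ) :
    (A.submatrix e e ⊗ₖ A) *ᵥ vec ((1 : Matrix τ τ R).submatrix id e)
      = vec ((1 : Matrix τ τ R).submatrix id e) := by
  have hA1 : A * (1 : Matrix τ τ R).submatrix id e = A.submatrix id e := by
    ext
    simp [mul_apply, one_apply]
  rw [kronecker_mulVec_vec, hA1, transpose_submatrix, submatrix_mul_equiv, hA]

theorem sum_kronecker_submatrix_mulVec_vec_one_submatrix {R : Type*} [CommRing R]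
    (A : κ → Matrix τ τ R) (hA : ∀ i, A i * (A i)ᵀ = 1) (e : σ ≃ τ) :
    (∑ i, (A i).submatrix e e ⊗ₖ A i) *ᵥ vec ((1 : Matrix τ τ R).submatrix id e)
      = (Fintype.card κ : R) • vec ((1 : Matrix τ τ R).submatrix id e) := by
  simp only [sum_mulVec, kronecker_submatrix_mulVec_vec_one_submatrix _ (hA _), Finset.sum_const,
    Finset.card_univ, Nat.cast_smul_eq_nsmul]

theorem card_le_l2_opNorm_sum_kronecker_submatrix [DecidableEq σ] [Nonempty σ]
    (A : κ → Matrix τ τ ℂ) (hA : ∀ i, A i * (A i)ᵀ = 1) (e : σ ≃ τ) :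
    (Fintype.card κ : ℝ) ≤ ‖∑ i, (A i).submatrix e e ⊗ₖ A i‖ := by
  have hv : vec ((1 : Matrix τ τ ℂ).submatrix id e) ≠ 0 := by
    rw [Ne, vec_eq_zero_iff]
    intro h
    have := congr_fun₂ h (e (Classical.arbitrary σ)) (Classical.arbitrary σ)
    simp [one_apply] at this
  simpa using norm_le_l2_opNorm_of_mulVec_eq_smul hv
    (sum_kronecker_submatrix_mulVec_vec_one_submatrix A hA e)

end VecOne

end Matrix

section Pauli

theorem pauliX_mul_self : pauliX * pauliX = 1 := by
  simp [pauliX, one_fin_two]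

theorem pauliZ_mul_self : pauliZ * pauliZ = 1 := by
  simp [pauliZ, one_fin_two]

theorem pauliX_transpose : pauliXᵀ = pauliX := by
  ext i j
  fin_cases i <;> fin_cases j <;> rfl

theorem pauliZ_transpose : pauliZᵀ = pauliZ := by
  ext i j
  fin_cases i <;> fin_cases j <;> rfl

theorem pauliX_conjTranspose : pauliXᴴ = pauliX := by
  ext i j
  fin_cases i <;> fin_cases j <;> simp [pauliX]

theorem pauliZ_conjTranspose : pauliZᴴ = pauliZ := by
  ext i j
  fin_cases i <;> fin_cases j <;> simp [pauliZ]

variable (n : ℕ) (k : Fin n)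

theorem pauliOp_eq_piKronecker :
    pauliOp n k = piKronecker fun j => if j < k then pauliZ else if j = k then pauliX else 1 :=
  rfl

theorem pauliOp_transpose : (pauliOp n k)ᵀ = pauliOp n k := by
  rw [pauliOp_eq_piKronecker, piKronecker_transpose]
  congr! 2 with j
  split_ifs <;> simp [pauliX_transpose, pauliZ_transpose]

theorem pauliOp_conjTranspose : (pauliOp n k)ᴴ = pauliOp n k := by
  rw [pauliOp_eq_piKronecker, piKronecker_conjTranspose]
  congr! 2 with j
  split_ifs <;> simp [pauliX_conjTranspose, pauliZ_conjTranspose]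

theorem pauliOp_mul_self : pauliOp n k * pauliOp n k = 1 := by
  rw [pauliOp_eq_piKronecker, piKronecker_mul, ← piKronecker_one]
  congr 1
  funext j
  simp only [Pi.mul_apply, Pi.one_apply]
  split_ifs <;> simp [pauliX_mul_self, pauliZ_mul_self]

theorem pauliOp_mul_transpose : pauliOp n k * (pauliOp n k)ᵀ = 1 := by
  rw [pauliOp_transpose, pauliOp_mul_self]

theorem l2_opNorm_submatrix_pauliOp_le_one {σ : Type*} [Fintype σ] [DecidableEq σ]
    (e : σ ≃ (Fin n → Fin 2)) : ‖(pauliOp n k).submatrix e e‖ ≤ 1 := by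
  apply l2_opNorm_le_one_of_conjTranspose_mul_self
  rw [conjTranspose_submatrix, submatrix_mul_equiv, pauliOp_conjTranspose, pauliOp_mul_self,
    submatrix_one_equiv]

end Pauli

section Amplification

variable {n : ℕ} {ι : Type*}

def amplification (φ : (Fin n → ℂ) →ₗ[ℂ] Matrix ι ι ℂ) {k : ℕ}
    (B : Matrix (Fin k) (Fin k) (Fin n → ℂ)) : Matrix (Fin k × ι) (Fin k × ι) ℂ :=
  of fun p q => φ (B p.1 q.1) p.2 q.2

theorem amplification_eq_sum (φ : (Fin n → ℂ) →ₗ[ℂ] Matrix ι ι ℂ) {k : ℕ}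
    (B : Matrix (Fin k) (Fin k) (Fin n → ℂ)) :
    amplification φ B = ∑ i, B.map (· i) ⊗ₖ φ (Pi.single i 1) := by
  ext p q
  rw [amplification, of_apply, pi_eq_sum_univ' (B p.1 q.1)]
  simp [Matrix.sum_apply, kroneckerMap_apply]

variable [Fintype ι] [DecidableEq ι]

theorem l2_opNorm_amplification_le (φ : (Fin n → ℂ) →ₗ[ℂ] Matrix ι ι ℂ) {k : ℕ}
    {B : Matrix (Fin k) (Fin k) (Fin n → ℂ)} (hB : ∀ i, ‖B.map (· i)‖ ≤ 1) :
    ‖amplification φ B‖ ≤ ∑ i, ‖φ (Pi.single i 1)‖ := by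
  rw [amplification_eq_sum]
  refine (norm_sum_le _ _).trans (Finset.sum_le_sum fun i _ => ?_)
  calc ‖B.map (· i) ⊗ₖ φ (Pi.single i 1)‖ ≤ ‖B.map (· i)‖ * ‖φ (Pi.single i 1)‖ :=
        l2_opNorm_kronecker_le _ _
    _ ≤ ‖φ (Pi.single i 1)‖ := mul_le_of_le_one_left (norm_nonneg _) (hB i)

theorem l2_opNorm_amplification_le_cbNorm (φ : (Fin n → ℂ) →ₗ[ℂ] Matrix ι ι ℂ) {k : ℕ}
    {B : Matrix (Fin k) (Fin k) (Fin n → ℂ)} (hB : ∀ i, ‖B.map (· i)‖ ≤ 1) :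
    ‖amplification φ B‖ ≤ cbNorm φ := by
  have hbound : ∀ k, ∀ r ∈ {r : ℝ | ∃ B : Matrix (Fin k) (Fin k) (Fin n → ℂ),
      (∀ i : Fin n, opNorm (of fun p q => B p q i) ≤ 1) ∧
      r = opNorm (of fun p q : Fin k × ι => φ (B p.1 q.1) p.2 q.2)},
      r ≤ ∑ i, ‖φ (Pi.single i 1)‖ := by
    rintro k r ⟨B, hB, rfl⟩
    exact l2_opNorm_amplification_le φ hB
  refine le_ciSup_of_le ⟨∑ i, ‖φ (Pi.single i 1)‖, ?_⟩ k (le_csSup ⟨_, hbound k⟩ ⟨B, hB, rfl⟩)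
  rintro _ ⟨k, rfl⟩
  exact Real.sSup_le (hbound k) (by positivity)

end Amplification

/-- With `A_1, ..., A_n` the anticommuting self-adjoint Pauli-built matrices, the operator norm
of `∑ i, A_i ⊗ A_i` is at least `n`; consequently the completely bounded norm of the map
`φ(e_i) = (1/√n) A_i` from `ℓ_∞^n` to `M_{2^n}(ℂ)` is at least `√n`. -/
theorem stmt3 (n : ℕ)
    (φ : (Fin n → ℂ) →ₗ[ℂ] Matrix (Fin n → Fin 2) (Fin n → Fin 2) ℂ)
    (hφ : ∀ i, φ (Pi.single i 1) = ((Real.sqrt n)⁻¹ : ℂ) • pauliOp n i) :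
    (n : ℝ) ≤ opNorm (∑ i, pauliOp n i ⊗ₖ pauliOp n i) ∧
    Real.sqrt n ≤ cbNorm φ := by
  have horth := pauliOp_mul_transpose n
  constructor
  · rw [opNorm_eq_l2_opNorm]
    simpa using card_le_l2_opNorm_sum_kronecker_submatrix _ horth (Equiv.refl _)
  · let e := (Fintype.equivFin (Fin n → Fin 2)).symm
    let B : Matrix _ _ (Fin n → ℂ) := of fun p q i => pauliOp n i (e p) (e q)
    have hB : ∀ i, ‖B.map (· i)‖ ≤ 1 := fun i => l2_opNorm_submatrix_pauliOp_le_one n i e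
    have hamp : amplification φ B
        = ((Real.sqrt n)⁻¹ : ℂ) • ∑ i, (pauliOp n i).submatrix e e ⊗ₖ pauliOp n i := by
      simp only [amplification_eq_sum, hφ, kronecker_smul, Finset.smul_sum]
      rfl
    have : Nonempty (Fin (Fintype.card (Fin n → Fin 2))) := e.nonempty
    calc Real.sqrt n = (Real.sqrt n)⁻¹ * n := by rw [inv_mul_eq_div, Real.div_sqrt]
      _ ≤ ‖amplification φ B‖ := by
        rw [hamp, norm_smul, norm_inv, Complex.norm_real, Real.norm_of_nonneg (Real.sqrt_nonneg _)]
        gcongr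
        simpa using card_le_l2_opNorm_sum_kronecker_submatrix _ horth e
      _ ≤ cbNorm φ := l2_opNorm_amplification_le_cbNorm φ hB
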